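/- Let (Λ_Q, f) be a C^{1+Lip} expansive and transitive Markov system. Let G ⊂ I_i be a gap, let x ∈ Λ_Q be an endpoint of G, and let (i_1 i_2 …) be a sequence admissible for x such that the points g_{i_k…i_1}(x), k ∈ ℕ, are pairwise distinct. Then Σ_{k=1}^∞ diam g_{i_k…i_1}(G) ≤ 2|I|. -/

import Mathlib

open Set Metric Filter MeasureTheory
open scoped Classical

/-- The word `[ω 0, ω 1, …, ω (n-1)]` read off from the sequence `ω`. -/
def wordOf {p : ℕ} (ω : ℕ → Fin p) (n : ℕ) : List (Fin p) :=
  (List.range n).map ω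

/-- The cylinder sets `Δ_{i₁…iₙ} = g_{i₁…i_{n-1}}(I_{iₙ})` of the iterated function
system given by the big interval `I`, the subintervals `Isub i` and the maps `g i`;
by convention `Δ_∅ = I`. -/
def cylOf {p : ℕ} (I : Set ℝ) (Isub : Fin p → Set ℝ) (g : Fin p → ℝ → ℝ) :
    List (Fin p) → Set ℝ
  | [] => I
  | [i] => Isub i
  | i :: j :: w => g i '' cylOf I Isub g (j :: w)

/-- The sequence `ω` contains the word `w` as a sub-word starting at position `n`. -/
def containsAt {p : ℕ} (ω : ℕ → Fin p) (w : List (Fin p)) (n : ℕ) : Prop :=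
  ∀ k : ℕ, (hk : k < w.length) → ω (n + k) = w.get ⟨k, hk⟩

/-- The sequence `ω` belongs to `Σ_Q`, i.e. it contains no word of `Q` as a sub-word. -/
def avoids {p : ℕ} (Q : Finset (List (Fin p))) (ω : ℕ → Fin p) : Prop :=
  ∀ w ∈ Q, ∀ n : ℕ, ¬ containsAt ω w n

/-- The limit set `Λ_Q = π(Σ_Q)`: points lying, for some `ω ∈ Σ_Q`, in all the
cylinders `Δ_{ω₀…ω_{n-1}}`. -/
def limitSetOf {p : ℕ} (I : Set ℝ) (Isub : Fin p → Set ℝ) (g : Fin p → ℝ → ℝ)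
    (Q : Finset (List (Fin p))) : Set ℝ :=
  { x | ∃ ω : ℕ → Fin p, avoids Q ω ∧ ∀ n : ℕ, x ∈ cylOf I Isub g (wordOf ω n) }

/-- `gIter g ω n = g_{i_n … i_1} = g_{ω (n-1)} ∘ ⋯ ∘ g_{ω 0}`. -/
def gIter {p : ℕ} (g : Fin p → ℝ → ℝ) (ω : ℕ → Fin p) : ℕ → ℝ → ℝ
  | 0 => id
  | n + 1 => g (ω n) ∘ gIter g ω n

/-- The derivative of the composition `gIter g ω n` at `x` (chain rule product). -/
noncomputable def gIterDer {p : ℕ} (g gder : Fin p → ℝ → ℝ) (ω : ℕ → Fin p)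
    (n : ℕ) (x : ℝ) : ℝ :=
  ∏ k ∈ Finset.range n, gder (ω k) (gIter g ω k x)

/-- Prepending the finite word `w` to the infinite sequence `ω`. -/
def prependWord {p : ℕ} (w : List (Fin p)) (ω : ℕ → Fin p) : ℕ → Fin p :=
  fun n => if h : n < w.length then w.get ⟨n, h⟩ else ω (n - w.length)

/-- `l(Σ_Q)`: the minimum, over all finite sets `Q'` of words with `Σ_{Q'} = Σ_Q`,
of the maximal length `l(Q')` of words of `Q'`. -/
noncomputable def minRepLen {p : ℕ} (Q : Finset (List (Fin p))) : ℕ :=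
  sInf { n : ℕ | ∃ Q' : Finset (List (Fin p)),
    (∀ ω : ℕ → Fin p, avoids Q' ω ↔ avoids Q ω) ∧ Q'.sup List.length = n }

/-- A `C^{1+Lip}` expansive and transitive Markov system `(Λ_Q, f)`. -/
structure ExpansiveMarkovSystem (p : ℕ) where
  /-- the alphabet is nonempty -/
  hp : 0 < p
  /-- the ambient closed interval `I` -/
  I : Set ℝ
  hI : ∃ a b : ℝ, a < b ∧ I = Set.Icc a b
  /-- the pairwise disjoint closed subintervals `I₁, …, I_p` -/
  Isub : Fin p → Set ℝ
  hIsub : ∀ i, ∃ a b : ℝ, a < b ∧ Isub i = Set.Icc a b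
  hsubI : ∀ i, Isub i ⊆ I
  hdisj : ∀ i j, i ≠ j → Disjoint (Isub i) (Isub j)
  /-- the contractions `g i`, defined on `⋃ j, Isub j` -/
  g : Fin p → ℝ → ℝ
  /-- the derivative of `g i` on `⋃ j, Isub j` -/
  gder : Fin p → ℝ → ℝ
  hg_inj : ∀ i, Set.InjOn (g i) (⋃ j, Isub j)
  hg_range : ∀ i, g i '' (⋃ j, Isub j) ⊆ interior (Isub i)
  hg_deriv : ∀ i, ∀ x ∈ ⋃ j, Isub j,
    HasDerivWithinAt (g i) (gder i x) (⋃ j, Isub j) x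
  hgder_ne : ∀ i, ∀ x ∈ ⋃ j, Isub j, gder i x ≠ 0
  hgder_cont : ∀ i, ContinuousOn (gder i) (⋃ j, Isub j)
  /-- `log |g i'|` is Lipschitz on the domain -/
  hgder_lip : ∀ i, ∃ θ : ℝ, ∀ x ∈ ⋃ j, Isub j, ∀ y ∈ ⋃ j, Isub j,
    abs (Real.log (abs (gder i x)) - Real.log (abs (gder i y))) ≤ θ * |x - y|
  /-- the expanding map `f`, with `f (g i x) = x` -/
  f : ℝ → ℝ
  /-- the derivative `f'` of `f` on the ranges of the `g i` -/
  fder : ℝ → ℝ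
  hf : ∀ i, ∀ x ∈ ⋃ j, Isub j, f (g i x) = x
  hfder : ∀ i, ∀ x ∈ ⋃ j, Isub j, fder (g i x) = (gder i x)⁻¹
  /-- the generator (expansivity) condition: `d_n → 0` -/
  hgen : ∀ ε : ℝ, 0 < ε → ∃ N : ℕ, ∀ w : List (Fin p), N ≤ w.length →
    Metric.diam (cylOf I Isub g w) < ε
  /-- the finite set of forbidden words -/
  Q : Finset (List (Fin p))
  /-- `Σ_Q` is completely invariant: `σ(Σ_Q) = Σ_Q` -/
  hQinv : ∀ ω : ℕ → Fin p, avoids Q ω →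
    ∃ ω' : ℕ → Fin p, avoids Q ω' ∧ ∀ n : ℕ, ω' (n + 1) = ω n
  /-- `f|Λ_Q` is topologically transitive -/
  htrans : ∀ U V : Set ℝ, IsOpen U → IsOpen V →
    (U ∩ limitSetOf I Isub g Q).Nonempty → (V ∩ limitSetOf I Isub g Q).Nonempty →
    ∃ n : ℕ, ∃ x ∈ U ∩ limitSetOf I Isub g Q, f^[n] x ∈ V

namespace ExpansiveMarkovSystem

variable {p : ℕ} (S : ExpansiveMarkovSystem p)

/-- The common domain `⋃ j, I_j` of the maps `g i`. -/
def dom : Set ℝ := ⋃ j, S.Isub j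

/-- The cylinder `Δ_w` associated to the word `w`. -/
def cyl (w : List (Fin p)) : Set ℝ := cylOf S.I S.Isub S.g w

/-- The limit set `Λ_Q`. -/
def limitSet : Set ℝ := limitSetOf S.I S.Isub S.g S.Q

/-- The domain of `f`, i.e. the union of the ranges of the `g i`. -/
def domF : Set ℝ := ⋃ i, S.g i '' S.dom

/-- The derivative `(fⁿ)'(x)` of the `n`-th iterate of `f` at `x`. -/
noncomputable def derIter (n : ℕ) (x : ℝ) : ℝ :=
  ∏ k ∈ Finset.range n, S.fder (S.f^[k] x)

/-- The Lyapunov exponent `χ(x) = limsup (1/n) log |(fⁿ)'(x)|`. -/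
noncomputable def lyap (x : ℝ) : ℝ :=
  Filter.limsup (fun n : ℕ => Real.log |S.derIter n x| / n) Filter.atTop

/-- The set `H` of points of `Λ_Q` with infinitely many hyperbolic instants. -/
def hypSet : Set ℝ :=
  { x ∈ S.limitSet | ∃ c₁ : ℝ, 0 < c₁ ∧ ∃ c₂ : ℝ, 0 < c₂ ∧
      ∃ n : ℕ → ℕ, StrictMono n ∧
        ∃ r : ℕ → ℝ, (∀ k, 0 < r k) ∧ Antitone r ∧
          Filter.Tendsto r Filter.atTop (nhds 0) ∧
          ∀ k : ℕ,
            (∀ y ∈ Metric.ball x (r k), ∀ j < n k, S.f^[j] y ∈ S.domF) ∧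
            c₁ < Metric.diam (S.f^[n k] '' Metric.ball x (r k)) ∧
            (∀ y ∈ Metric.ball x (r k), ∀ z ∈ Metric.ball x (r k),
              |S.derIter (n k) y| / |S.derIter (n k) z| < c₂) }

/-- `x` is a parabolic periodic point: `f^m(x) = x` and `|(f^m)'(x)| = 1`. -/
def IsParabolicPeriodic (x : ℝ) : Prop :=
  x ∈ S.limitSet ∧ ∃ m : ℕ, 1 ≤ m ∧ S.f^[m] x = x ∧ |S.derIter m x| = 1

/-- `ν` is a `t`-conformal (Borel probability) measure supported on `Λ_Q`. -/
def IsConformal (ν : Measure ℝ) (t : ℝ) : Prop :=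
  IsProbabilityMeasure ν ∧ ν S.limitSetᶜ = 0 ∧
    ∀ A : Set ℝ, MeasurableSet A → A ⊆ S.limitSet → Set.InjOn S.f A →
      ν (S.f '' A) = ∫⁻ x in A, ENNReal.ofReal (|S.fder x| ^ t) ∂ν

/-- `t_c = inf {t ≥ 0 : a t-conformal measure on Λ_Q exists}`. -/
noncomputable def tc : ℝ :=
  sInf { t : ℝ | 0 ≤ t ∧ ∃ ν : Measure ℝ, S.IsConformal ν t }

/-- `n` is a hyperbolic time for `x` with exponent `α`. -/
def IsHypTime (α : ℝ) (x : ℝ) (n : ℕ) : Prop :=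
  ∀ k : ℕ, 1 ≤ k → k ≤ n → Real.exp (k * α) ≤ |S.derIter k (S.f^[n - k] x)|

/-- `H_HT(α)`: the points of `Λ_Q` with infinitely many hyperbolic times with exponent `α`. -/
def HHT (α : ℝ) : Set ℝ :=
  { x ∈ S.limitSet | ∀ N : ℕ, ∃ n : ℕ, N ≤ n ∧ S.IsHypTime α x n }

end ExpansiveMarkovSystem

/-! Each image `Eₖ = g_{i_k…i_1}(G)` is an interval disjoint from `Λ_Q`, because `fᵏ` maps it
back onto the gap `G`, and the point `xₖ = g_{i_k…i_1}(x) ∈ Λ_Q` is one of its endpoints. Since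
the `xₖ` are distinct and none of them lies in any `E_l`, no point lies in three of the `Eₖ`: two
of those would have their endpoints `xₖ` on the same side of it, and the nearer endpoint would lie
inside the other interval. Hence `∑ₖ |Eₖ| ≤ 2 |I|`. -/

open scoped Finset ENNReal

section IntervalCounting

variable {α : Type*} [LinearOrder α] [TopologicalSpace α] [OrderTopology α]

theorem Set.OrdConnected.mem_of_mem_closure_of_lt_of_lt {E : Set α} (hE : E.OrdConnected)
    {u v y : α} (hu : u ∈ closure E) (hy : y ∈ E) (huv : u < v) (hvy : v < y) : v ∈ E := by
  obtain ⟨z, hzv, hz⟩ := mem_closure_iff_nhds.mp hu _ (Iio_mem_nhds huv)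
  exact hE.out hz hy ⟨le_of_lt hzv, hvy.le⟩

theorem Set.OrdConnected.mem_of_mem_closure_of_gt_of_gt {E : Set α} (hE : E.OrdConnected)
    {u v y : α} (hu : u ∈ closure E) (hy : y ∈ E) (hvu : v < u) (hyv : y < v) : v ∈ E := by
  obtain ⟨z, hvz, hz⟩ := mem_closure_iff_nhds.mp hu _ (Ioi_mem_nhds hvu)
  exact hE.out hy hz ⟨hyv.le, le_of_lt hvz⟩

theorem card_filter_mem_le_two_of_boundary_points {ι : Type*} (t : Finset ι) (E : ι → Set α)
    (x : ι → α)
    (hE : ∀ k ∈ t, (E k).OrdConnected) (hxE : ∀ k ∈ t, x k ∈ closure (E k))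
    (hx_notMem : ∀ k ∈ t, ∀ l ∈ t, x l ∉ E k) (hx : Set.InjOn x t) (y : α) :
    #{k ∈ t | y ∈ E k} ≤ 2 := by
  by_contra! hcard
  -- pigeonhole: two of the marked points lie on the same side of `y`
  obtain ⟨k, hk, l, hl, hkl, hside⟩ := Finset.exists_ne_map_eq_of_card_lt_of_maps_to
    (t := Finset.univ) (f := fun k => decide (x k < y)) (by simpa using hcard)
    (fun _ _ => Finset.mem_coe.mpr (Finset.mem_univ _))
  simp only [Finset.mem_filter, decide_eq_decide] at hk hl hside
  wlog hlt : x k < x l generalizing k l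
  · exact this l k hkl.symm hl hk hside.symm
      ((Ne.symm (hx.ne hk.1 hl.1 hkl)).lt_of_le (not_lt.mp hlt))
  by_cases hly : x l < y
  · exact hx_notMem k hk.1 l hl.1
      ((hE k hk.1).mem_of_mem_closure_of_lt_of_lt (hxE k hk.1) hk.2 hlt hly)
  · have hyk : y < x k := (not_lt.mp (hside.not.mpr hly)).lt_of_ne
      fun h => hx_notMem k hk.1 k hk.1 (h ▸ hk.2)
    exact hx_notMem l hl.1 k hk.1
      ((hE l hl.1).mem_of_mem_closure_of_gt_of_gt (hxE l hl.1) hl.2 hlt hyk)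

end IntervalCounting

theorem MeasureTheory.sum_measure_le_mul_measure_biUnion {α ι : Type*} [MeasurableSpace α]
    (μ : Measure α) (t : Finset ι) (s : ι → Set α) (hs : ∀ k ∈ t, MeasurableSet (s k)) {m : ℕ}
    (hm : ∀ y, #{k ∈ t | y ∈ s k} ≤ m) :
    ∑ k ∈ t, μ (s k) ≤ m * μ (⋃ k ∈ t, s k) := by
  have hU : MeasurableSet (⋃ k ∈ t, s k) := Finset.measurableSet_biUnion t hs
  have hpt : ∀ y, ∑ k ∈ t, (s k).indicator 1 y ≤ (m : ℝ≥0∞) * (⋃ k ∈ t, s k).indicator 1 y := by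
    intro y
    rw [Finset.sum_indicator_eq_sum_filter]
    by_cases hy : y ∈ ⋃ k ∈ t, s k
    · simpa [hy] using hm y
    · have : {k ∈ t | y ∈ s k} = ∅ := by
        simp only [Set.mem_iUnion, not_exists] at hy
        exact Finset.filter_eq_empty_iff.mpr hy
      simp [this]
  calc ∑ k ∈ t, μ (s k) = ∫⁻ y, ∑ k ∈ t, (s k).indicator 1 y ∂μ := by
        rw [lintegral_finsetSum' _ fun k hk => (measurable_one.indicator (hs k hk)).aemeasurable]
        exact Finset.sum_congr rfl fun k hk => (lintegral_indicator_one (hs k hk)).symm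
    _ ≤ ∫⁻ y, (m : ℝ≥0∞) * (⋃ k ∈ t, s k).indicator 1 y ∂μ := lintegral_mono hpt
    _ = m * μ (⋃ k ∈ t, s k) := by
        rw [lintegral_const_mul _ (measurable_one.indicator hU), lintegral_indicator_one hU]

theorem Set.OrdConnected.ofReal_diam_le_volume {E : Set ℝ} (hE : E.OrdConnected) :
    ENNReal.ofReal (diam E) ≤ volume E := by
  rcases E.eq_empty_or_nonempty with rfl | hne
  · simp
  by_cases hb : Bornology.IsBounded E
  · rw [Real.diam_eq hb, ← Real.volume_Ioo]
    exact measure_mono (IsConnected.Ioo_csInf_csSup_subset ⟨hne, hE.isPreconnected⟩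
      hb.bddBelow hb.bddAbove)
  · simp [diam_eq_zero_of_unbounded hb]

theorem sum_diam_le_two_mul_diam_of_boundary_points {ι : Type*} (t : Finset ι) (E : ι → Set ℝ)
    (x : ι → ℝ) {A : Set ℝ} (hA : Bornology.IsBounded A) (hEA : ∀ k ∈ t, E k ⊆ A)
    (hE : ∀ k ∈ t, (E k).OrdConnected) (hxE : ∀ k ∈ t, x k ∈ closure (E k))
    (hx_notMem : ∀ k ∈ t, ∀ l ∈ t, x l ∉ E k) (hx : Set.InjOn x t) :
    ∑ k ∈ t, diam (E k) ≤ 2 * diam A := by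
  have key : ∑ k ∈ t, ENNReal.ofReal (diam (E k)) ≤ ENNReal.ofReal (2 * diam A) :=
    calc ∑ k ∈ t, ENNReal.ofReal (diam (E k)) ≤ ∑ k ∈ t, volume (E k) :=
          Finset.sum_le_sum fun k hk => (hE k hk).ofReal_diam_le_volume
      _ ≤ (2 : ℕ) * volume (⋃ k ∈ t, E k) :=
          sum_measure_le_mul_measure_biUnion volume t E (fun k hk => (hE k hk).measurableSet)
            (card_filter_mem_le_two_of_boundary_points t E x hE hxE hx_notMem hx)
      _ ≤ 2 * ediam A := by
          rw [Nat.cast_ofNat]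
          gcongr
          exact (measure_mono (Set.iUnion₂_subset hEA)).trans (Real.volume_le_diam A)
      _ = ENNReal.ofReal (2 * diam A) := by
          rw [ENNReal.ofReal_mul zero_le_two, ← ENNReal.ofReal_toReal hA.ediam_ne_top]
          simp [diam]
  rw [← ENNReal.ofReal_sum_of_nonneg fun k _ => diam_nonneg] at key
  exact (ENNReal.ofReal_le_ofReal_iff (mul_nonneg zero_le_two diam_nonneg)).mp key

theorem avoids_shift {p : ℕ} {Q : Finset (List (Fin p))} {ω : ℕ → Fin p} (h : avoids Q ω) :
    avoids Q (fun m => ω (m + 1)) := fun w hw n hc =>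
  h w hw (n + 1) fun k hk => by simpa [Nat.add_right_comm] using hc k hk

theorem wordOf_succ {p : ℕ} (ω : ℕ → Fin p) (n : ℕ) :
    wordOf ω (n + 1) = ω 0 :: wordOf (fun m => ω (m + 1)) n := by
  simp only [wordOf, List.range_succ_eq_map, List.map_cons, List.map_map]
  rfl

namespace ExpansiveMarkovSystem

variable {p : ℕ} (S : ExpansiveMarkovSystem p)

theorem dom_subset_I : S.dom ⊆ S.I := Set.iUnion_subset S.hsubI

theorem mapsTo_g (i : Fin p) : MapsTo (S.g i) S.dom S.dom := fun _ hz =>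
  Set.subset_iUnion S.Isub i (interior_subset (S.hg_range i ⟨_, hz, rfl⟩))

theorem mapsTo_gIter (ω : ℕ → Fin p) : ∀ n, MapsTo (gIter S.g ω n) S.dom S.dom
  | 0 => Set.mapsTo_id _
  | n + 1 => (S.mapsTo_g (ω n)).comp (mapsTo_gIter ω n)

theorem continuousOn_gIter (ω : ℕ → Fin p) : ∀ n, ContinuousOn (gIter S.g ω n) S.dom
  | 0 => continuousOn_id
  | n + 1 => (ContinuousOn.comp (fun z hz => (S.hg_deriv (ω n) z hz).continuousWithinAt)
      (continuousOn_gIter ω n) (S.mapsTo_gIter ω n))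

theorem iterate_f_gIter (ω : ℕ → Fin p) : ∀ n, ∀ z ∈ S.dom, S.f^[n] (gIter S.g ω n z) = z
  | 0, _, _ => rfl
  | n + 1, z, hz => by
      rw [Function.iterate_succ_apply, gIter, Function.comp_apply,
        S.hf (ω n) _ (S.mapsTo_gIter ω n hz), iterate_f_gIter ω n z hz]

theorem cyl_wordOf_succ_succ (ω : ℕ → Fin p) (n : ℕ) :
    S.cyl (wordOf ω (n + 2)) = S.g (ω 0) '' S.cyl (wordOf (fun m => ω (m + 1)) (n + 1)) := by
  rw [wordOf_succ ω (n + 1), wordOf_succ (fun m => ω (m + 1)) n]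
  rfl

theorem cyl_wordOf_succ_subset_dom (ω : ℕ → Fin p) : ∀ n, S.cyl (wordOf ω (n + 1)) ⊆ S.dom
  | 0 => Set.subset_iUnion S.Isub (ω 0)
  | n + 1 => by
      rw [cyl_wordOf_succ_succ]
      exact (S.mapsTo_g (ω 0)).image_subset.trans' (Set.image_mono
        (cyl_wordOf_succ_subset_dom _ n))

theorem mapsTo_f_limitSet : MapsTo S.f S.limitSet S.limitSet := by
  rintro y ⟨ω, hω, hy⟩
  have hfy : ∀ n, S.f y ∈ S.cyl (wordOf (fun m => ω (m + 1)) (n + 1)) := by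
    intro n
    obtain ⟨z, hz, rfl⟩ := (S.cyl_wordOf_succ_succ ω n).subset (hy (n + 2))
    rwa [S.hf (ω 0) z (S.cyl_wordOf_succ_subset_dom _ n hz)]
  refine ⟨_, avoids_shift hω, fun n => ?_⟩
  cases n with
  | zero => exact S.dom_subset_I (S.cyl_wordOf_succ_subset_dom _ 0 (hfy 0))
  | succ n => exact hfy n

theorem disjoint_gIter_image_limitSet (ω : ℕ → Fin p) (n : ℕ) {G : Set ℝ} (hG : G ⊆ S.dom)
    (hGΛ : Disjoint G S.limitSet) : Disjoint (gIter S.g ω n '' G) S.limitSet := by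
  refine Set.disjoint_left.mpr ?_
  rintro _ ⟨z, hz, rfl⟩ hzΛ
  have := S.mapsTo_f_limitSet.iterate n hzΛ
  rw [S.iterate_f_gIter ω n z (hG hz)] at this
  exact Set.disjoint_left.mp hGΛ hz this

end ExpansiveMarkovSystem

theorem gap_images_summable_general {p : ℕ} (S : ExpansiveMarkovSystem p) (i : Fin p)
    (a b : ℝ) (hab : a < b)
    (hGi : Set.Ioo a b ⊆ S.Isub i) (hgap : Set.Ioo a b ∩ S.limitSet = ∅)
    (x : ℝ) (hend : x = a ∨ x = b)
    (ω : ℕ → Fin p) (hadm : ∀ n : ℕ, 1 ≤ n → gIter S.g ω n x ∈ S.limitSet)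
    (hdist : ∀ k l : ℕ, 1 ≤ k → 1 ≤ l → gIter S.g ω k x = gIter S.g ω l x → k = l) :
    ∀ N : ℕ, ∑ k ∈ Finset.range N, Metric.diam (gIter S.g ω (k + 1) '' Set.Ioo a b)
      ≤ 2 * Metric.diam S.I := by
  intro N
  have hIcc : Icc a b ⊆ S.dom := by
    obtain ⟨c, d, -, hcd⟩ := S.hIsub i
    rw [← closure_Ioo hab.ne]
    exact (closure_minimal hGi (hcd ▸ isClosed_Icc)).trans (Set.subset_iUnion S.Isub i)
  have hG : Ioo a b ⊆ S.dom := Ioo_subset_Icc_self.trans hIcc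
  have hI : Bornology.IsBounded S.I := by
    obtain ⟨c, d, -, hcd⟩ := S.hI
    exact hcd ▸ Metric.isBounded_Icc c d
  have hx : x ∈ closure (Ioo a b) := by
    rw [closure_Ioo hab.ne]
    rcases hend with rfl | rfl
    exacts [left_mem_Icc.mpr hab.le, right_mem_Icc.mpr hab.le]
  refine sum_diam_le_two_mul_diam_of_boundary_points _ _ (fun k => gIter S.g ω (k + 1) x) hI
    (fun k _ => ((S.mapsTo_gIter ω _).mono_left hG).image_subset.trans S.dom_subset_I)
    (fun k _ => (isPreconnected_Ioo.image _ ((S.continuousOn_gIter ω _).mono hG)).ordConnected)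
    (fun k _ => ?_) (fun k _ l _ => ?_) (fun k _ l _ h => ?_)
  · rw [← closure_Ioo hab.ne] at hIcc
    exact ((S.continuousOn_gIter ω _).mono hIcc).image_closure (mem_image_of_mem _ hx)
  · exact Set.disjoint_right.mp (S.disjoint_gIter_image_limitSet ω _ hG
      (Set.disjoint_iff_inter_eq_empty.mpr hgap)) (hadm _ (Nat.le_add_left 1 l))
  · exact Nat.succ_injective (hdist _ _ (Nat.le_add_left 1 k) (Nat.le_add_left 1 l) h)

/-- If `G = (a,b) ⊆ I_i` is a gap, `x ∈ Λ_Q` is an endpoint of `G`, and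
`(i₁ i₂ …)` is admissible for `x` with the points `g_{i_k…i_1}(x)` pairwise distinct, then
`Σ_{k=1}^∞ diam g_{i_k…i_1}(G) ≤ 2 |I|`. -/
theorem gap_images_summable {p : ℕ} (S : ExpansiveMarkovSystem p) (i : Fin p)
    (a b : ℝ) (hab : a < b)
    (hGi : Set.Ioo a b ⊆ S.Isub i) (hgap : Set.Ioo a b ∩ S.limitSet = ∅)
    (x : ℝ) (hx : x ∈ S.limitSet) (hend : x = a ∨ x = b)
    (ω : ℕ → Fin p) (hadm : ∀ n : ℕ, 1 ≤ n → gIter S.g ω n x ∈ S.limitSet)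
    (hdist : ∀ k l : ℕ, 1 ≤ k → 1 ≤ l → gIter S.g ω k x = gIter S.g ω l x → k = l) :
    ∀ N : ℕ, ∑ k ∈ Finset.range N, Metric.diam (gIter S.g ω (k + 1) '' Set.Ioo a b)
      ≤ 2 * Metric.diam S.I :=
  gap_images_summable_general S i a b hab hGi hgap x hend ω hadm hdist
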